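/- arXiv:1503.01585 — 2 statements merged into one kernel-verified Lean document; each statement's English description precedes it below -/
import Mathlib

section
/- Let 𝔸_V = (A, V, ψ_V, σ_V) and 𝔸_W = (A, W, ψ_W, σ_W) be two quadruples with common monoid A and let Δ : V⊗W → V⊗W be a link morphism between them. Then the morphism ∇_{A⊗V⊗W} = (μ_A⊗V⊗W)∘(A⊗ψ_{V⊗W})∘(A⊗V⊗W⊗η_A) is idempotent, and ψ_{V⊗W} = ∇_{A⊗V⊗W}∘ψ_{V⊗W}. -/
open CategoryTheory MonoidalCategory

namespace IteratedWCP

universe v u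

variable {C : Type u} [Category.{v} C] [MonoidalCategory C]

/-- The monoid (algebra) axioms for `(A, η, μ)`. -/
def IsMonoid {A : C} (η : 𝟙_ C ⟶ A) (μ : A ⊗ A ⟶ A) : Prop :=
  (η ▷ A) ≫ μ = (λ_ A).hom ∧ (A ◁ η) ≫ μ = (ρ_ A).hom ∧
    (μ ▷ A) ≫ μ = (α_ A A A).hom ≫ (A ◁ μ) ≫ μ

/-- The compatibility condition
`(μ_A ⊗ V) ∘ (A ⊗ ψ) ∘ (ψ ⊗ A) = ψ ∘ (V ⊗ μ_A)`. -/
def Compat {A V : C} (μ : A ⊗ A ⟶ A) (ψ : V ⊗ A ⟶ A ⊗ V) : Prop :=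
  (ψ ▷ A) ≫ (α_ A V A).hom ≫ (A ◁ ψ) ≫ (α_ A A V).inv ≫ (μ ▷ V)
    = (α_ V A A).hom ≫ (V ◁ μ) ≫ ψ

/-- The idempotent `∇_{A⊗V} = (μ_A ⊗ V) ∘ (A ⊗ ψ) ∘ (A ⊗ V ⊗ η_A)`. -/
def nabla {A V : C} (η : 𝟙_ C ⟶ A) (μ : A ⊗ A ⟶ A) (ψ : V ⊗ A ⟶ A ⊗ V) :
    A ⊗ V ⟶ A ⊗ V :=
  (ρ_ (A ⊗ V)).inv ≫ ((A ⊗ V) ◁ η) ≫ (α_ A V A).hom ≫ (A ◁ ψ) ≫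
    (α_ A A V).inv ≫ (μ ▷ V)

/-- The twisted condition
`(μ_A ⊗ V) ∘ (A ⊗ ψ) ∘ (σ ⊗ A) = (μ_A ⊗ V) ∘ (A ⊗ σ) ∘ (ψ ⊗ V) ∘ (V ⊗ ψ)`. -/
def Twisted {A V : C} (μ : A ⊗ A ⟶ A) (ψ : V ⊗ A ⟶ A ⊗ V)
    (σ : V ⊗ V ⟶ A ⊗ V) : Prop :=
  (σ ▷ A) ≫ (α_ A V A).hom ≫ (A ◁ ψ) ≫ (α_ A A V).inv ≫ (μ ▷ V)
    = (α_ V V A).hom ≫ (V ◁ ψ) ≫ (α_ V A V).inv ≫ (ψ ▷ V) ≫ (α_ A V V).hom ≫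
        (A ◁ σ) ≫ (α_ A A V).inv ≫ (μ ▷ V)

/-- The cocycle condition
`(μ_A ⊗ V) ∘ (A ⊗ σ) ∘ (σ ⊗ V) = (μ_A ⊗ V) ∘ (A ⊗ σ) ∘ (ψ ⊗ V) ∘ (V ⊗ σ)`. -/
def Cocycle {A V : C} (μ : A ⊗ A ⟶ A) (ψ : V ⊗ A ⟶ A ⊗ V)
    (σ : V ⊗ V ⟶ A ⊗ V) : Prop :=
  (σ ▷ V) ≫ (α_ A V V).hom ≫ (A ◁ σ) ≫ (α_ A A V).inv ≫ (μ ▷ V)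
    = (α_ V V V).hom ≫ (V ◁ σ) ≫ (α_ V A V).inv ≫ (ψ ▷ V) ≫ (α_ A V V).hom ≫
        (A ◁ σ) ≫ (α_ A A V).inv ≫ (μ ▷ V)

/-- Normalization : `∇_{A⊗V} ∘ σ = σ`. -/
def Normalized {A V : C} (η : 𝟙_ C ⟶ A) (μ : A ⊗ A ⟶ A) (ψ : V ⊗ A ⟶ A ⊗ V)
    (σ : V ⊗ V ⟶ A ⊗ V) : Prop :=
  σ ≫ nabla η μ ψ = σ

/-- `(ψ_V ⊗ W) ∘ (V ⊗ ψ_W) : (V ⊗ W) ⊗ A ⟶ A ⊗ (V ⊗ W)`. -/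
def psi2 {A V W : C} (ψV : V ⊗ A ⟶ A ⊗ V) (ψW : W ⊗ A ⟶ A ⊗ W) :
    (V ⊗ W) ⊗ A ⟶ A ⊗ (V ⊗ W) :=
  (α_ V W A).hom ≫ (V ◁ ψW) ≫ (α_ V A W).inv ≫ (ψV ▷ W) ≫ (α_ A V W).hom

/-- `ψ_{V⊗W} = (ψ_V ⊗ W) ∘ (V ⊗ ψ_W) ∘ (Δ ⊗ A)`. -/
def psiVW {A V W : C} (ψV : V ⊗ A ⟶ A ⊗ V) (ψW : W ⊗ A ⟶ A ⊗ W)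
    (Δ : V ⊗ W ⟶ V ⊗ W) : (V ⊗ W) ⊗ A ⟶ A ⊗ (V ⊗ W) :=
  (Δ ▷ A) ≫ psi2 ψV ψW

/-- `Δ` is a link morphism:
`ψ_{V⊗W} = (A ⊗ Δ) ∘ ψ_{V⊗W}` and `ψ_{V⊗W} = ∇_{A⊗V⊗W} ∘ (ψ_V ⊗ W) ∘ (V ⊗ ψ_W)`. -/
def IsLink {A V W : C} (η : 𝟙_ C ⟶ A) (μ : A ⊗ A ⟶ A)
    (ψV : V ⊗ A ⟶ A ⊗ V) (ψW : W ⊗ A ⟶ A ⊗ W) (Δ : V ⊗ W ⟶ V ⊗ W) : Prop :=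
  psiVW ψV ψW Δ = psiVW ψV ψW Δ ≫ (A ◁ Δ) ∧
  psiVW ψV ψW Δ = psi2 ψV ψW ≫ nabla η μ (psiVW ψV ψW Δ)

/-- The final multiplication step `(μ_A ⊗ V ⊗ W)` on `A ⊗ ((A ⊗ V) ⊗ W)`. -/
def muPart (V W : C) {A : C} (μ : A ⊗ A ⟶ A) :
    A ⊗ ((A ⊗ V) ⊗ W) ⟶ A ⊗ (V ⊗ W) :=
  (A ◁ (α_ A V W).hom) ≫ (α_ A A (V ⊗ W)).inv ≫ (μ ▷ (V ⊗ W))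

/-- Condition (i) of the definition of a twisting morphism:
`(ψ_V ⊗ W) ∘ (V ⊗ ψ_W) ∘ (τ ⊗ A) = (A ⊗ τ) ∘ (ψ_W ⊗ V) ∘ (W ⊗ ψ_V)`. -/
def TwistI {A V W : C} (ψV : V ⊗ A ⟶ A ⊗ V) (ψW : W ⊗ A ⟶ A ⊗ W)
    (τ : W ⊗ V ⟶ V ⊗ W) : Prop :=
  (τ ▷ A) ≫ psi2 ψV ψW
    = (α_ W V A).hom ≫ (W ◁ ψV) ≫ (α_ W A V).inv ≫ (ψW ▷ V) ≫
        (α_ A W V).hom ≫ (A ◁ τ)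

/-- Condition (ii) of the definition of a twisting morphism. -/
def TwistII {A V W : C} (μ : A ⊗ A ⟶ A) (ψV : V ⊗ A ⟶ A ⊗ V)
    (σV : V ⊗ V ⟶ A ⊗ V) (ψW : W ⊗ A ⟶ A ⊗ W) (σW : W ⊗ W ⟶ A ⊗ W)
    (τ : W ⊗ V ⟶ V ⊗ W) : Prop :=
  ((τ ▷ W) ▷ V) ≫ ((α_ V W W).hom ▷ V) ≫ ((V ◁ σW) ▷ V) ≫
      ((α_ V A W).inv ▷ V) ≫ (α_ (V ⊗ A) W V).hom ≫ (ψV ⊗ₘ τ) ≫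
      (α_ A V (V ⊗ W)).hom ≫ (A ◁ (α_ V V W).inv) ≫ (A ◁ (σV ▷ W)) ≫ muPart V W μ
    = (α_ (W ⊗ V) W V).hom ≫ ((W ⊗ V) ◁ τ) ≫ (α_ W V (V ⊗ W)).hom ≫
        (W ◁ (α_ V V W).inv) ≫ (W ◁ (σV ▷ W)) ≫ (W ◁ (α_ A V W).hom) ≫
        (α_ W A (V ⊗ W)).inv ≫ (ψW ▷ (V ⊗ W)) ≫ (α_ A W (V ⊗ W)).hom ≫
        (A ◁ (α_ W V W).inv) ≫ (A ◁ (τ ▷ W)) ≫ (A ◁ (α_ V W W).hom) ≫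
        (A ◁ (V ◁ σW)) ≫ (A ◁ (α_ V A W).inv) ≫ (A ◁ (ψV ▷ W)) ≫ muPart V W μ

/-- `σ_{V⊗W} = (μ_A ⊗ V ⊗ W) ∘ (A ⊗ ψ_V ⊗ W) ∘ (σ_V ⊗ σ_W) ∘ (V ⊗ τ ⊗ W)`. -/
def sigmaVW {A V W : C} (μ : A ⊗ A ⟶ A) (ψV : V ⊗ A ⟶ A ⊗ V)
    (σV : V ⊗ V ⟶ A ⊗ V) (σW : W ⊗ W ⟶ A ⊗ W) (τ : W ⊗ V ⟶ V ⊗ W) :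
    (V ⊗ W) ⊗ (V ⊗ W) ⟶ A ⊗ (V ⊗ W) :=
  (α_ V W (V ⊗ W)).hom ≫ (V ◁ (α_ W V W).inv) ≫ (V ◁ (τ ▷ W)) ≫
    (V ◁ (α_ V W W).hom) ≫ (α_ V V (W ⊗ W)).inv ≫ (σV ⊗ₘ σW) ≫
    (α_ A V (A ⊗ W)).hom ≫ (A ◁ (α_ V A W).inv) ≫ (A ◁ (ψV ▷ W)) ≫ muPart V W μ

/-- The three σ-compatibility conditions for `σ_{V⊗W}` and a link morphism `Δ`. -/
def SigmaCompat {A V W : C} (Δ : V ⊗ W ⟶ V ⊗ W)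
    (σ : (V ⊗ W) ⊗ (V ⊗ W) ⟶ A ⊗ (V ⊗ W)) : Prop :=
  σ = (Δ ▷ (V ⊗ W)) ≫ σ ∧ σ = ((V ⊗ W) ◁ Δ) ≫ σ ∧ σ = σ ≫ (A ◁ Δ)

/-- The weak crossed product multiplication
`μ_{A⊗V} = (μ_A ⊗ V) ∘ (μ_A ⊗ σ) ∘ (A ⊗ ψ ⊗ V)`. -/
def wmul {A V : C} (μ : A ⊗ A ⟶ A) (ψ : V ⊗ A ⟶ A ⊗ V) (σ : V ⊗ V ⟶ A ⊗ V) :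
    (A ⊗ V) ⊗ (A ⊗ V) ⟶ A ⊗ V :=
  (α_ A V (A ⊗ V)).hom ≫ (A ◁ (α_ V A V).inv) ≫ (A ◁ (ψ ▷ V)) ≫
    (A ◁ (α_ A V V).hom) ≫ (α_ A A (V ⊗ V)).inv ≫ (μ ⊗ₘ σ) ≫
    (α_ A A V).inv ≫ (μ ▷ V)

/-- `β_ν = (μ_A ⊗ V) ∘ (A ⊗ ν)`. -/
def beta {A V : C} (μ : A ⊗ A ⟶ A) (ν : 𝟙_ C ⟶ A ⊗ V) : A ⟶ A ⊗ V :=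
  (ρ_ A).inv ≫ (A ◁ ν) ≫ (α_ A A V).inv ≫ (μ ▷ V)

/-- Preunit equation (1):
`(μ_A ⊗ V) ∘ (A ⊗ σ) ∘ (ψ ⊗ V) ∘ (V ⊗ ν) = ∇_{A⊗V} ∘ (η_A ⊗ V)`. -/
def PreEq1 {A V : C} (η : 𝟙_ C ⟶ A) (μ : A ⊗ A ⟶ A) (ψ : V ⊗ A ⟶ A ⊗ V)
    (σ : V ⊗ V ⟶ A ⊗ V) (ν : 𝟙_ C ⟶ A ⊗ V) : Prop :=
  (ρ_ V).inv ≫ (V ◁ ν) ≫ (α_ V A V).inv ≫ (ψ ▷ V) ≫ (α_ A V V).hom ≫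
      (A ◁ σ) ≫ (α_ A A V).inv ≫ (μ ▷ V)
    = (λ_ V).inv ≫ (η ▷ V) ≫ nabla η μ ψ

/-- Preunit equation (2):
`(μ_A ⊗ V) ∘ (A ⊗ σ) ∘ (ν ⊗ V) = ∇_{A⊗V} ∘ (η_A ⊗ V)`. -/
def PreEq2 {A V : C} (η : 𝟙_ C ⟶ A) (μ : A ⊗ A ⟶ A) (ψ : V ⊗ A ⟶ A ⊗ V)
    (σ : V ⊗ V ⟶ A ⊗ V) (ν : 𝟙_ C ⟶ A ⊗ V) : Prop :=
  (λ_ V).inv ≫ (ν ▷ V) ≫ (α_ A V V).hom ≫ (A ◁ σ) ≫ (α_ A A V).inv ≫ (μ ▷ V)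
    = (λ_ V).inv ≫ (η ▷ V) ≫ nabla η μ ψ

/-- Preunit equation (3):
`(μ_A ⊗ V) ∘ (A ⊗ ψ) ∘ (ν ⊗ A) = β_ν`. -/
def PreEq3 {A V : C} (μ : A ⊗ A ⟶ A) (ψ : V ⊗ A ⟶ A ⊗ V)
    (ν : 𝟙_ C ⟶ A ⊗ V) : Prop :=
  (λ_ A).inv ≫ (ν ▷ A) ≫ (α_ A V A).hom ≫ (A ◁ ψ) ≫ (α_ A A V).inv ≫ (μ ▷ V)
    = beta μ ν

/-- `ν` is a preunit for the associative product `m` :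
`m ∘ (X ⊗ ν) = m ∘ (ν ⊗ X) = m ∘ (X ⊗ (m ∘ (ν ⊗ ν)))`. -/
def IsPreunit {X : C} (m : X ⊗ X ⟶ X) (ν : 𝟙_ C ⟶ X) : Prop :=
  (ρ_ X).inv ≫ (X ◁ ν) ≫ m = (λ_ X).inv ≫ (ν ▷ X) ≫ m ∧
  (λ_ X).inv ≫ (ν ▷ X) ≫ m
    = (ρ_ X).inv ≫ (X ◁ ((λ_ (𝟙_ C)).inv ≫ (ν ⊗ₘ ν) ≫ m)) ≫ m

/-- `ν_{V⊗W} = ∇_{A⊗V⊗W} ∘ (μ_A ⊗ V ⊗ W) ∘ (A ⊗ ψ_V ⊗ W) ∘ (ν_V ⊗ ν_W)`. -/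
def nuVW {A V W : C} (η : 𝟙_ C ⟶ A) (μ : A ⊗ A ⟶ A) (ψV : V ⊗ A ⟶ A ⊗ V)
    (ψW : W ⊗ A ⟶ A ⊗ W) (Δ : V ⊗ W ⟶ V ⊗ W)
    (νV : 𝟙_ C ⟶ A ⊗ V) (νW : 𝟙_ C ⟶ A ⊗ W) : 𝟙_ C ⟶ A ⊗ (V ⊗ W) :=
  (λ_ (𝟙_ C)).inv ≫ (νV ⊗ₘ νW) ≫ (α_ A V (A ⊗ W)).hom ≫ (A ◁ (α_ V A W).inv) ≫
    (A ◁ (ψV ▷ W)) ≫ muPart V W μ ≫ nabla η μ (psiVW ψV ψW Δ)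

/-- Iterated preunit condition (pre-1):
`(μ_A⊗V⊗W)∘(A⊗σ_V⊗W)∘(ψ_V⊗τ)∘(V⊗ψ_W⊗V)∘(Δ⊗ν_V) = ∇_{A⊗V⊗W}∘(η_A⊗V⊗W)`. -/
def IterPre1 {A V W : C} (η : 𝟙_ C ⟶ A) (μ : A ⊗ A ⟶ A)
    (ψV : V ⊗ A ⟶ A ⊗ V) (σV : V ⊗ V ⟶ A ⊗ V) (ψW : W ⊗ A ⟶ A ⊗ W)
    (τ : W ⊗ V ⟶ V ⊗ W) (Δ : V ⊗ W ⟶ V ⊗ W) (νV : 𝟙_ C ⟶ A ⊗ V) : Prop :=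
  (ρ_ (V ⊗ W)).inv ≫ (Δ ⊗ₘ νV) ≫ (α_ V W (A ⊗ V)).hom ≫ (V ◁ (α_ W A V).inv) ≫
      (V ◁ (ψW ▷ V)) ≫ (V ◁ (α_ A W V).hom) ≫ (α_ V A (W ⊗ V)).inv ≫ (ψV ⊗ₘ τ) ≫
      (α_ A V (V ⊗ W)).hom ≫ (A ◁ (α_ V V W).inv) ≫ (A ◁ (σV ▷ W)) ≫ muPart V W μ
    = (λ_ (V ⊗ W)).inv ≫ (η ▷ (V ⊗ W)) ≫ nabla η μ (psiVW ψV ψW Δ)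

/-- Iterated preunit condition (pre-2):
`(μ_A⊗V⊗W)∘(A⊗ψ_V⊗W)∘(A⊗V⊗σ_W)∘(A⊗τ⊗W)∘(ν_W⊗V⊗W) = ∇_{A⊗V⊗W}∘(η_A⊗V⊗W)`. -/
def IterPre2 {A V W : C} (η : 𝟙_ C ⟶ A) (μ : A ⊗ A ⟶ A)
    (ψV : V ⊗ A ⟶ A ⊗ V) (ψW : W ⊗ A ⟶ A ⊗ W) (σW : W ⊗ W ⟶ A ⊗ W)
    (τ : W ⊗ V ⟶ V ⊗ W) (Δ : V ⊗ W ⟶ V ⊗ W) (νW : 𝟙_ C ⟶ A ⊗ W) : Prop :=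
  (λ_ (V ⊗ W)).inv ≫ (νW ▷ (V ⊗ W)) ≫ (α_ A W (V ⊗ W)).hom ≫
      (A ◁ (α_ W V W).inv) ≫ (A ◁ (τ ▷ W)) ≫ (A ◁ (α_ V W W).hom) ≫
      (A ◁ (V ◁ σW)) ≫ (A ◁ (α_ V A W).inv) ≫ (A ◁ (ψV ▷ W)) ≫ muPart V W μ
    = (λ_ (V ⊗ W)).inv ≫ (η ▷ (V ⊗ W)) ≫ nabla η μ (psiVW ψV ψW Δ)

/-- `i_{A×V} = p_{A⊗V⊗W} ∘ (μ_A⊗V⊗W) ∘ (A⊗ψ_V⊗W) ∘ (i_{A⊗V} ⊗ ν_W)`. -/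
def iAV {A V W X Z : C} (μ : A ⊗ A ⟶ A) (ψV : V ⊗ A ⟶ A ⊗ V)
    (νW : 𝟙_ C ⟶ A ⊗ W) (iX : X ⟶ A ⊗ V) (p2 : A ⊗ (V ⊗ W) ⟶ Z) : X ⟶ Z :=
  (ρ_ X).inv ≫ (iX ⊗ₘ νW) ≫ (α_ A V (A ⊗ W)).hom ≫ (A ◁ (α_ V A W).inv) ≫
    (A ◁ (ψV ▷ W)) ≫ muPart V W μ ≫ p2

/-- `i_W = p_{A⊗V⊗W} ∘ (ν_V ⊗ W)`. -/
def iWmor {A V W Z : C} (νV : 𝟙_ C ⟶ A ⊗ V) (p2 : A ⊗ (V ⊗ W) ⟶ Z) : W ⟶ Z :=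
  (λ_ W).inv ≫ (νV ▷ W) ≫ (α_ A V W).hom ≫ p2

/-- `∇_{(A×V)⊗W} = (p_{A⊗V} ⊗ W) ∘ ∇_{A⊗V⊗W} ∘ (i_{A⊗V} ⊗ W)`. -/
def nabPrime {A V W X : C} (η : 𝟙_ C ⟶ A) (μ : A ⊗ A ⟶ A)
    (ψV : V ⊗ A ⟶ A ⊗ V) (ψW : W ⊗ A ⟶ A ⊗ W) (Δ : V ⊗ W ⟶ V ⊗ W)
    (iX : X ⟶ A ⊗ V) (pX : A ⊗ V ⟶ X) : X ⊗ W ⟶ X ⊗ W :=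
  (iX ▷ W) ≫ (α_ A V W).hom ≫ nabla η μ (psiVW ψV ψW Δ) ≫
    (α_ A V W).inv ≫ (pX ▷ W)

/-- Equality (new-it-1). -/
def NewIt1 {A V W : C} (η : 𝟙_ C ⟶ A) (μ : A ⊗ A ⟶ A)
    (ψV : V ⊗ A ⟶ A ⊗ V) (σV : V ⊗ V ⟶ A ⊗ V) (ψW : W ⊗ A ⟶ A ⊗ W)
    (τ : W ⊗ V ⟶ V ⊗ W) (Δ : V ⊗ W ⟶ V ⊗ W) (νW : 𝟙_ C ⟶ A ⊗ W) : Prop :=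
  (ρ_ (V ⊗ V)).inv ≫ ((V ⊗ V) ◁ νW) ≫ (α_ (V ⊗ V) A W).inv ≫
      (((σV ▷ A) ≫ (α_ A V A).hom ≫ (A ◁ ψV) ≫ (α_ A A V).inv ≫ (μ ▷ V)) ▷ W) ≫
      (α_ A V W).hom ≫ nabla η μ (psiVW ψV ψW Δ)
    = ((ρ_ V).inv ▷ V) ≫ ((V ◁ νW) ▷ V) ≫ ((α_ V A W).inv ▷ V) ≫
        (α_ (V ⊗ A) W V).hom ≫ (ψV ⊗ₘ τ) ≫ (α_ A V (V ⊗ W)).hom ≫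
        (A ◁ (α_ V V W).inv) ≫ (A ◁ (σV ▷ W)) ≫ muPart V W μ ≫
        nabla η μ (psiVW ψV ψW Δ)

/-- Equality (new-it-2). -/
def NewIt2 {A V W : C} (η : 𝟙_ C ⟶ A) (μ : A ⊗ A ⟶ A)
    (ψV : V ⊗ A ⟶ A ⊗ V) (σV : V ⊗ V ⟶ A ⊗ V) (ψW : W ⊗ A ⟶ A ⊗ W)
    (Δ : V ⊗ W ⟶ V ⊗ W) : Prop :=
  (σV ▷ W) ≫ (α_ A V W).hom ≫ nabla η μ (psiVW ψV ψW Δ)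
    = (α_ V V W).hom ≫ (V ◁ Δ) ≫ (ρ_ (V ⊗ (V ⊗ W))).inv ≫
        ((V ⊗ (V ⊗ W)) ◁ η) ≫ (α_ V (V ⊗ W) A).hom ≫ (V ◁ (α_ V W A).hom) ≫
        (α_ V V (W ⊗ A)).inv ≫ (σV ⊗ₘ ψW) ≫ (α_ A V (A ⊗ W)).hom ≫
        (A ◁ (α_ V A W).inv) ≫ (A ◁ (ψV ▷ W)) ≫ muPart V W μ

/-- Equality (new-it-3). -/
def NewIt3 {A V W : C} (η : 𝟙_ C ⟶ A) (μ : A ⊗ A ⟶ A)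
    (ψV : V ⊗ A ⟶ A ⊗ V) (ψW : W ⊗ A ⟶ A ⊗ W) (σW : W ⊗ W ⟶ A ⊗ W)
    (Δ : V ⊗ W ⟶ V ⊗ W) : Prop :=
  (V ◁ σW) ≫ (α_ V A W).inv ≫ (ψV ▷ W) ≫ (α_ A V W).hom ≫
      nabla η μ (psiVW ψV ψW Δ)
    = (α_ V W W).inv ≫ (Δ ▷ W) ≫ (α_ V W W).hom ≫ (V ◁ σW) ≫
        (α_ V A W).inv ≫ (ψV ▷ W) ≫ (α_ A V W).hom

/-- A weak distributive law of the monoid `S` over the monoid `T`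
(`lam : T ⊗ S ⟶ S ⊗ T`). -/
def WDL {T S : C} (ηT : 𝟙_ C ⟶ T) (μT : T ⊗ T ⟶ T) (ηS : 𝟙_ C ⟶ S)
    (μS : S ⊗ S ⟶ S) (lam : T ⊗ S ⟶ S ⊗ T) : Prop :=
  ((μT ▷ S) ≫ lam
      = (α_ T T S).hom ≫ (T ◁ lam) ≫ (α_ T S T).inv ≫ (lam ▷ T) ≫
          (α_ S T T).hom ≫ (S ◁ μT)) ∧
  ((T ◁ μS) ≫ lam
      = (α_ T S S).inv ≫ (lam ▷ S) ≫ (α_ S T S).hom ≫ (S ◁ lam) ≫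
          (α_ S S T).inv ≫ (μS ▷ T)) ∧
  ((((λ_ S).inv ≫ (ηT ▷ S) ≫ lam) ▷ T) ≫ (α_ S T T).hom ≫ (S ◁ μT)
      = (S ◁ ((ρ_ T).inv ≫ (T ◁ ηS) ≫ lam)) ≫ (α_ S S T).inv ≫ (μS ▷ T))

/-- The Yang–Baxter relation
`(S⊗λ2)∘(λ3⊗T)∘(D⊗λ1) = (λ1⊗D)∘(T⊗λ3)∘(λ2⊗S)`. -/
def YB {S T D : C} (l1 : T ⊗ S ⟶ S ⊗ T) (l2 : D ⊗ T ⟶ T ⊗ D)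
    (l3 : D ⊗ S ⟶ S ⊗ D) : Prop :=
  (α_ D T S).hom ≫ (D ◁ l1) ≫ (α_ D S T).inv ≫ (l3 ▷ T) ≫
      (α_ S D T).hom ≫ (S ◁ l2)
    = (l2 ▷ S) ≫ (α_ T D S).hom ≫ (T ◁ l3) ≫ (α_ T S D).inv ≫
        (l1 ▷ D) ≫ (α_ S T D).hom

/-- `σ_T = (S ⊗ μ_T) ∘ ((λ ∘ (T ⊗ η_S)) ⊗ T)`. -/
def sigWDL {S T : C} (ηS : 𝟙_ C ⟶ S) (μT : T ⊗ T ⟶ T)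
    (lam : T ⊗ S ⟶ S ⊗ T) : T ⊗ T ⟶ S ⊗ T :=
  (((ρ_ T).inv ≫ (T ◁ ηS) ≫ lam) ▷ T) ≫ (α_ S T T).hom ≫ (S ◁ μT)

/-- `∇_{S⊗T} = (μ_S ⊗ T) ∘ (S ⊗ (λ ∘ (T ⊗ η_S)))`. -/
def nabWDL {S T : C} (ηS : 𝟙_ C ⟶ S) (μS : S ⊗ S ⟶ S)
    (lam : T ⊗ S ⟶ S ⊗ T) : S ⊗ T ⟶ S ⊗ T :=
  (S ◁ ((ρ_ T).inv ≫ (T ◁ ηS) ≫ lam)) ≫ (α_ S S T).inv ≫ (μS ▷ T)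


/-!
For any `ψ : U ⊗ A ⟶ A ⊗ U`, associativity of `μ` merges two copies of `∇_ψ` into
`(μ ⊗ U) ∘ (A ⊗ (∇_ψ ∘ ψ)) ∘ (A ⊗ U ⊗ η)`, so `∇_ψ` is idempotent as soon as `∇_ψ ∘ ψ = ψ`;
and `∇_ψ ∘ ψ = ψ` holds whenever `ψ` is compatible with `μ`, by the right unit law.
The composite `ψ₂ = (ψ_V ⊗ W) ∘ (V ⊗ ψ_W)` is compatible with `μ`, so `∇_{ψ₂}` is idempotent.
Since `∇_{A⊗V⊗W} = ∇_{ψ₂} ∘ (A ⊗ Δ)`, the two link identities give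
`∇_{A⊗V⊗W} ∘ ψ_{V⊗W} = ∇_{ψ₂} ∘ ψ_{V⊗W} = ∇_{ψ₂} ∘ ∇_{ψ₂} ∘ (A ⊗ Δ) ∘ ψ₂ = ψ_{V⊗W}`,
and idempotence of `∇_{A⊗V⊗W}` follows from the first step.
-/

theorem nabla_whiskerRight_comp {A U : C} (η : 𝟙_ C ⟶ A) (μ : A ⊗ A ⟶ A) (Δ : U ⟶ U)
    (ψ : U ⊗ A ⟶ A ⊗ U) :
    nabla η μ ((Δ ▷ A) ≫ ψ) = (A ◁ Δ) ≫ nabla η μ ψ := by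
  simp only [nabla, MonoidalCategory.whiskerLeft_comp, Category.assoc]
  rw [← associator_naturality_middle_assoc, whisker_exchange_assoc,
    rightUnitor_inv_naturality_assoc]

theorem psi_comp_nabla_of_compat {A U : C} {η : 𝟙_ C ⟶ A} {μ : A ⊗ A ⟶ A}
    {ψ : U ⊗ A ⟶ A ⊗ U} (hη : (A ◁ η) ≫ μ = (ρ_ A).hom) (hψ : Compat μ ψ) :
    ψ ≫ nabla η μ ψ = ψ := by
  have hunit : (ρ_ (U ⊗ A)).inv ≫ ((U ⊗ A) ◁ η) ≫ (α_ U A A).hom ≫ (U ◁ μ) = 𝟙 _ := by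
    calc _ = U ◁ ((ρ_ A).inv ≫ (A ◁ η) ≫ μ) := by monoidal
      _ = 𝟙 _ := by simp [hη]
  calc ψ ≫ nabla η μ ψ
      = (ρ_ (U ⊗ A)).inv ≫ ((U ⊗ A) ◁ η) ≫ (ψ ▷ A) ≫ (α_ A U A).hom ≫ (A ◁ ψ) ≫
          (α_ A A U).inv ≫ (μ ▷ U) := by
        rw [nabla, rightUnitor_inv_naturality_assoc, ← whisker_exchange_assoc]
    _ = ((ρ_ (U ⊗ A)).inv ≫ ((U ⊗ A) ◁ η) ≫ (α_ U A A).hom ≫ (U ◁ μ)) ≫ ψ := by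
        rw [hψ]; simp only [Category.assoc]
    _ = ψ := by rw [hunit, Category.id_comp]

theorem nabla_comp_nabla_of_psi_comp_nabla {A U : C} {η : 𝟙_ C ⟶ A} {μ : A ⊗ A ⟶ A}
    {ψ : U ⊗ A ⟶ A ⊗ U} (hμ : (μ ▷ A) ≫ μ = (α_ A A A).hom ≫ (A ◁ μ) ≫ μ)
    (h : ψ ≫ nabla η μ ψ = ψ) :
    nabla η μ ψ ≫ nabla η μ ψ = nabla η μ ψ := by
  calc nabla η μ ψ ≫ nabla η μ ψ
      = (ρ_ (A ⊗ U)).inv ≫ ((A ⊗ U) ◁ η) ≫ (α_ A U A).hom ≫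
          (A ◁ (ψ ≫ nabla η μ ψ)) ≫ (α_ A A U).inv ≫ (μ ▷ U) := by
        conv_lhs => unfold nabla
        simp only [Category.assoc]
        rw [rightUnitor_inv_naturality_assoc (μ ▷ U), ← whisker_exchange_assoc,
          associator_naturality_left_assoc, ← whisker_exchange_assoc,
          associator_inv_naturality_left_assoc, ← comp_whiskerRight, hμ]
        simp only [nabla, MonoidalCategory.whiskerLeft_comp, Category.assoc,
          comp_whiskerRight]
        monoidal
    _ = nabla η μ ψ := by rw [h, nabla]

theorem compat_psi2 {A V W : C} {μ : A ⊗ A ⟶ A} {ψV : V ⊗ A ⟶ A ⊗ V}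
    {ψW : W ⊗ A ⟶ A ⊗ W} (hψV : Compat μ ψV) (hψW : Compat μ ψW) :
    Compat μ (psi2 ψV ψW) := by
  unfold Compat at *
  unfold psi2
  calc
    _ = 𝟙 (((V ⊗ W) ⊗ A) ⊗ A) ⊗≫ (V ◁ (ψW ▷ A)) ⊗≫
          ((ψV ▷ (W ⊗ A)) ≫ ((A ⊗ V) ◁ ψW)) ⊗≫ (A ◁ (ψV ▷ W)) ⊗≫
          (μ ▷ (V ⊗ W)) := by monoidal
    _ = 𝟙 (((V ⊗ W) ⊗ A) ⊗ A) ⊗≫ (V ◁ (ψW ▷ A)) ⊗≫ ((V ⊗ A) ◁ ψW) ⊗≫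
          (((ψV ▷ A) ≫ (α_ A V A).hom ≫ (A ◁ ψV) ≫ (α_ A A V).inv ≫ (μ ▷ V)) ▷ W) ⊗≫
          𝟙 (A ⊗ (V ⊗ W)) := by rw [← whisker_exchange]; monoidal
    _ = 𝟙 (((V ⊗ W) ⊗ A) ⊗ A) ⊗≫
          (V ◁ ((ψW ▷ A) ≫ (α_ A W A).hom ≫ (A ◁ ψW) ≫ (α_ A A W).inv ≫ (μ ▷ W))) ⊗≫
          (ψV ▷ W) ⊗≫ 𝟙 (A ⊗ (V ⊗ W)) := by rw [hψV]; monoidal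
    _ = _ := by rw [hψW]; monoidal

theorem IsLink.psiVW_comp_nabla {A V W : C} {η : 𝟙_ C ⟶ A} {μ : A ⊗ A ⟶ A}
    {ψV : V ⊗ A ⟶ A ⊗ V} {ψW : W ⊗ A ⟶ A ⊗ W} {Δ : V ⊗ W ⟶ V ⊗ W}
    (hμ : (μ ▷ A) ≫ μ = (α_ A A A).hom ≫ (A ◁ μ) ≫ μ)
    (h2 : psi2 ψV ψW ≫ nabla η μ (psi2 ψV ψW) = psi2 ψV ψW)
    (hΔ : IsLink η μ ψV ψW Δ) :
    psiVW ψV ψW Δ ≫ nabla η μ (psiVW ψV ψW Δ) = psiVW ψV ψW Δ := by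
  obtain ⟨hΔψ, hψ⟩ := hΔ
  have hfactor : nabla η μ (psiVW ψV ψW Δ) = (A ◁ Δ) ≫ nabla η μ (psi2 ψV ψW) :=
    nabla_whiskerRight_comp η μ Δ (psi2 ψV ψW)
  have hidem := nabla_comp_nabla_of_psi_comp_nabla hμ h2
  calc psiVW ψV ψW Δ ≫ nabla η μ (psiVW ψV ψW Δ)
      = psiVW ψV ψW Δ ≫ nabla η μ (psi2 ψV ψW) := by
        rw [hfactor, ← Category.assoc, ← hΔψ]
    _ = psi2 ψV ψW ≫ (A ◁ Δ) ≫ nabla η μ (psi2 ψV ψW) ≫ nabla η μ (psi2 ψV ψW) := by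
        conv_lhs => rw [hψ, hfactor]
        simp only [Category.assoc]
    _ = psiVW ψV ψW Δ := by rw [hidem, ← hfactor, ← hψ]

theorem statement1_general {A V W : C} (η : 𝟙_ C ⟶ A) (μ : A ⊗ A ⟶ A)
    (ψV : V ⊗ A ⟶ A ⊗ V)
    (ψW : W ⊗ A ⟶ A ⊗ W)
    (Δ : V ⊗ W ⟶ V ⊗ W)
    (hA : IsMonoid η μ) (hψV : Compat μ ψV) (hψW : Compat μ ψW)
    (hΔ : IsLink η μ ψV ψW Δ) :
    nabla η μ (psiVW ψV ψW Δ) ≫ nabla η μ (psiVW ψV ψW Δ)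
        = nabla η μ (psiVW ψV ψW Δ) ∧
      psiVW ψV ψW Δ ≫ nabla η μ (psiVW ψV ψW Δ) = psiVW ψV ψW Δ := by
  obtain ⟨-, hunit, hassoc⟩ := hA
  have habsorb : psiVW ψV ψW Δ ≫ nabla η μ (psiVW ψV ψW Δ) = psiVW ψV ψW Δ :=
    hΔ.psiVW_comp_nabla hassoc (psi_comp_nabla_of_compat hunit (compat_psi2 hψV hψW))
  exact ⟨nabla_comp_nabla_of_psi_comp_nabla hassoc habsorb, habsorb⟩

theorem statement1 {A V W : C} (η : 𝟙_ C ⟶ A) (μ : A ⊗ A ⟶ A)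
    (ψV : V ⊗ A ⟶ A ⊗ V) (σV : V ⊗ V ⟶ A ⊗ V)
    (ψW : W ⊗ A ⟶ A ⊗ W) (σW : W ⊗ W ⟶ A ⊗ W)
    (Δ : V ⊗ W ⟶ V ⊗ W)
    (hA : IsMonoid η μ) (hψV : Compat μ ψV) (hψW : Compat μ ψW)
    (hΔ : IsLink η μ ψV ψW Δ) :
    nabla η μ (psiVW ψV ψW Δ) ≫ nabla η μ (psiVW ψV ψW Δ)
        = nabla η μ (psiVW ψV ψW Δ) ∧
      psiVW ψV ψW Δ ≫ nabla η μ (psiVW ψV ψW Δ) = psiVW ψV ψW Δ :=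
  statement1_general η μ ψV ψW Δ hA hψV hψW hΔ

end IteratedWCP
end

section
/- Under the standing iterated-preunit hypotheses, let i_{A⊗V}, p_{A⊗V} split ∇_{A⊗V} with image A×V, and endow A×V with the monoid structure (product μ_{A×V} = p_{A⊗V}∘μ_{A⊗V}∘(i_{A⊗V}⊗i_{A⊗V}), unit p_{A⊗V}∘ν_V). Then the morphism ∇_{(A×V)⊗W} = (p_{A⊗V}⊗W)∘∇_{A⊗V⊗W}∘(i_{A⊗V}⊗W) : (A×V)⊗W → (A×V)⊗W is idempotent; moreover, if ∇_{A⊗V⊗W}∘(σ_V⊗W) = (((μ_A⊗V)∘(A⊗ψ_V))⊗W)∘(σ_V⊗ψ_W)∘(V⊗Δ⊗η_A), then ∇_{(A×V)⊗W} is a morphism of left A×V-modules for the action μ_{A×V}⊗W, i.e. ∇_{(A×V)⊗W}∘(μ_{A×V}⊗W) = (μ_{A×V}⊗W)∘((A×V)⊗∇_{(A×V)⊗W}). -/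
/-!
Both `∇_{A⊗V}` and `∇_{A⊗V⊗W}` are left `A`-linear, and `∇_{A⊗V} ⊗ W` fixes `ψ_{V⊗W}` because
`∇_{A⊗V}` fixes `ψ_V`; hence `∇_{A⊗V⊗W}` absorbs `∇_{A⊗V} ⊗ W = (i_{A⊗V} ∘ p_{A⊗V}) ⊗ W`.
Conjugating by the splitting therefore preserves idempotence, and it transports the relation
`∇_{A⊗V⊗W} ∘ (μ_{A⊗V} ⊗ W) = (μ_{A⊗V} ⊗ W) ∘ (A ⊗ V ⊗ ∇_{A⊗V⊗W})` to `A × V`, since by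
normalization `μ_{A⊗V}` already lands in the image of `∇_{A⊗V}`.

On `a ⊗ v ⊗ b ⊗ v' ⊗ w` both sides of that relation equal `a b₁ c₁ d ⊗ v₃ ⊗ w'`, where
`ψ_V (v ⊗ b) = b₁ ⊗ v₁`, `ψ_{V⊗W} (v' ⊗ w ⊗ 1) = c ⊗ v'' ⊗ w'`, `ψ_V (v₁ ⊗ c) = c₁ ⊗ v₂` and
`σ_V (v₂ ⊗ v'') = d ⊗ v₃`: on the left by (new-it-2) and the twisted condition, on the right by
the compatibility of `ψ_V` with `μ_A`.
-/

open CategoryTheory MonoidalCategory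

namespace IteratedWCP

universe v u

variable {C : Type u} [Category.{v} C] [MonoidalCategory C]

section Retract

variable {X Y : C} (W : C) (i : X ⟶ Y) (p : Y ⟶ X) (E : Y ⊗ W ⟶ Y ⊗ W)

lemma retract_conj_idem (hE : E ≫ ((p ≫ i) ▷ W) = E) (hEE : E ≫ E = E) :
    ((i ▷ W) ≫ E ≫ (p ▷ W)) ≫ (i ▷ W) ≫ E ≫ (p ▷ W) = (i ▷ W) ≫ E ≫ (p ▷ W) := by
  calc ((i ▷ W) ≫ E ≫ (p ▷ W)) ≫ (i ▷ W) ≫ E ≫ (p ▷ W)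
      = (i ▷ W) ≫ (E ≫ ((p ≫ i) ▷ W)) ≫ E ≫ (p ▷ W) := by simp
    _ = (i ▷ W) ≫ E ≫ (p ▷ W) := by rw [hE, reassoc_of% hEE]

lemma retract_conj_whiskerRight_mul (m : Y ⊗ Y ⟶ Y) (hE : E ≫ ((p ≫ i) ▷ W) = E)
    (hm : m ≫ p ≫ i = m)
    (hmE : (m ▷ W) ≫ E = (α_ Y Y W).hom ≫ (Y ◁ E) ≫ (α_ Y Y W).inv ≫ (m ▷ W)) :
    (((i ⊗ₘ i) ≫ m ≫ p) ▷ W) ≫ (i ▷ W) ≫ E ≫ (p ▷ W)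
      = (α_ X X W).hom ≫ (X ◁ ((i ▷ W) ≫ E ≫ (p ▷ W))) ≫ (α_ X X W).inv ≫
          (((i ⊗ₘ i) ≫ m ≫ p) ▷ W) := by
  calc (((i ⊗ₘ i) ≫ m ≫ p) ▷ W) ≫ (i ▷ W) ≫ E ≫ (p ▷ W)
      = ((i ⊗ₘ i) ▷ W) ≫ ((m ≫ p ≫ i) ▷ W) ≫ E ≫ (p ▷ W) := by simp
    _ = ((i ⊗ₘ i) ▷ W) ≫ (α_ Y Y W).hom ≫ (Y ◁ (E ≫ ((p ≫ i) ▷ W))) ≫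
          (α_ Y Y W).inv ≫ (m ▷ W) ≫ (p ▷ W) := by
        rw [hm, hE, reassoc_of% hmE]
    _ = (α_ X X W).hom ≫ (i ▷ (X ⊗ W)) ≫ (Y ◁ ((i ▷ W) ≫ E ≫ (p ▷ W))) ≫
          (Y ◁ (i ▷ W)) ≫ (α_ Y Y W).inv ≫ (m ▷ W) ≫ (p ▷ W) := by
        rw [MonoidalCategory.tensorHom_def]; monoidal
    _ = (α_ X X W).hom ≫ (X ◁ ((i ▷ W) ≫ E ≫ (p ▷ W))) ≫ (α_ X X W).inv ≫
          (((i ⊗ₘ i) ≫ m ≫ p) ▷ W) := by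
        rw [← whisker_exchange_assoc, MonoidalCategory.tensorHom_def]; monoidal

end Retract

section Nabla

variable {A V : C} (η : 𝟙_ C ⟶ A) (μ : A ⊗ A ⟶ A)

def psiUnit (ψ : V ⊗ A ⟶ A ⊗ V) : V ⟶ A ⊗ V :=
  (ρ_ V).inv ≫ (V ◁ η) ≫ ψ

lemma nabla_eq_psiUnit (ψ : V ⊗ A ⟶ A ⊗ V) :
    nabla η μ ψ = (A ◁ psiUnit η ψ) ≫ (α_ A A V).inv ≫ (μ ▷ V) := by
  simp [nabla, psiUnit]

lemma psi_comp_nabla (ψ : V ⊗ A ⟶ A ⊗ V) (hA : IsMonoid η μ) (hψ : Compat μ ψ) :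
    ψ ≫ nabla η μ ψ = ψ := by
  calc ψ ≫ nabla η μ ψ
      = (ρ_ (V ⊗ A)).inv ≫ ((V ⊗ A) ◁ η) ≫ (ψ ▷ A) ≫ (α_ A V A).hom ≫ (A ◁ ψ) ≫
          (α_ A A V).inv ≫ (μ ▷ V) := by
        rw [nabla, rightUnitor_inv_naturality_assoc, ← whisker_exchange_assoc]
    _ = (V ◁ ((ρ_ A).inv ≫ (A ◁ η) ≫ μ)) ≫ ψ := by rw [hψ]; monoidal
    _ = ψ := by rw [hA.2.1]; simp

lemma mu_whiskerRight_comp_nabla (ψ : V ⊗ A ⟶ A ⊗ V) (hA : IsMonoid η μ) :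
    (μ ▷ V) ≫ nabla η μ ψ
      = (α_ A A V).hom ≫ (A ◁ nabla η μ ψ) ≫ (α_ A A V).inv ≫ (μ ▷ V) := by
  calc (μ ▷ V) ≫ nabla η μ ψ
      = (ρ_ ((A ⊗ A) ⊗ V)).inv ≫ (((A ⊗ A) ⊗ V) ◁ η) ≫ (α_ (A ⊗ A) V A).hom ≫
          ((μ ▷ (V ⊗ A)) ≫ (A ◁ ψ)) ≫ (α_ A A V).inv ≫ (μ ▷ V) := by
        rw [nabla, rightUnitor_inv_naturality_assoc, ← whisker_exchange_assoc]; monoidal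
    _ = (ρ_ ((A ⊗ A) ⊗ V)).inv ≫ (((A ⊗ A) ⊗ V) ◁ η) ≫ (α_ (A ⊗ A) V A).hom ≫
          ((A ⊗ A) ◁ ψ) ≫ (α_ (A ⊗ A) A V).inv ≫ (((μ ▷ A) ≫ μ) ▷ V) := by
        rw [← whisker_exchange]; monoidal
    _ = (α_ A A V).hom ≫ (A ◁ nabla η μ ψ) ≫ (α_ A A V).inv ≫ (μ ▷ V) := by
        rw [hA.2.2, nabla]; monoidal

lemma nabla_comp_eq_self (ψ : V ⊗ A ⟶ A ⊗ V) {M : A ⊗ V ⟶ A ⊗ V}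
    (hμM : (μ ▷ V) ≫ M = (α_ A A V).hom ≫ (A ◁ M) ≫ (α_ A A V).inv ≫ (μ ▷ V))
    (hψM : ψ ≫ M = ψ) :
    nabla η μ ψ ≫ M = nabla η μ ψ := by
  simp only [nabla, Category.assoc, hμM, Iso.inv_hom_id_assoc,
    ← MonoidalCategory.whiskerLeft_comp_assoc, hψM]

lemma nabla_comp_nabla (ψ : V ⊗ A ⟶ A ⊗ V) (hA : IsMonoid η μ) (hψ : Compat μ ψ) :
    nabla η μ ψ ≫ nabla η μ ψ = nabla η μ ψ :=
  nabla_comp_eq_self η μ ψ (mu_whiskerRight_comp_nabla η μ ψ hA) (psi_comp_nabla η μ ψ hA hψ)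

lemma wmul_comp_nabla (ψ : V ⊗ A ⟶ A ⊗ V) (σ : V ⊗ V ⟶ A ⊗ V)
    (hA : IsMonoid η μ) (hn : Normalized η μ ψ σ) :
    wmul μ ψ σ ≫ nabla η μ ψ = wmul μ ψ σ := by
  have hσ : σ ≫ nabla η μ ψ = σ := hn
  simp only [wmul, Category.assoc, mu_whiskerRight_comp_nabla η μ ψ hA, Iso.inv_hom_id_assoc,
    tensorHom_comp_whiskerLeft_assoc, hσ]

end Nabla

section Iterated

variable {A V W : C} (η : 𝟙_ C ⟶ A) (μ : A ⊗ A ⟶ A)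
variable (ψV : V ⊗ A ⟶ A ⊗ V) (σV : V ⊗ V ⟶ A ⊗ V) (ψW : W ⊗ A ⟶ A ⊗ W)
variable (Δ : V ⊗ W ⟶ V ⊗ W)

lemma compat_psi2_s11 (hV : Compat μ ψV) (hW : Compat μ ψW) : Compat μ (psi2 ψV ψW) := by
  unfold Compat
  symm
  calc (α_ (V ⊗ W) A A).hom ≫ ((V ⊗ W) ◁ μ) ≫ psi2 ψV ψW
      = 𝟙 _ ⊗≫ (V ◁ ((α_ W A A).hom ≫ (W ◁ μ) ≫ ψW)) ⊗≫ (ψV ▷ W) ⊗≫ 𝟙 _ := by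
        rw [psi2]; monoidal
    _ = 𝟙 _ ⊗≫ (V ◁ (ψW ▷ A)) ⊗≫ (V ◁ (A ◁ ψW)) ⊗≫
          (((α_ V A A).hom ≫ (V ◁ μ) ≫ ψV) ▷ W) ⊗≫ 𝟙 _ := by
        rw [← hW]; monoidal
    _ = 𝟙 _ ⊗≫ (V ◁ (ψW ▷ A)) ⊗≫ (((V ⊗ A) ◁ ψW) ≫ (ψV ▷ (A ⊗ W))) ⊗≫
          ((A ◁ ψV) ▷ W) ⊗≫ ((μ ▷ V) ▷ W) ⊗≫ 𝟙 _ := by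
        rw [← hV]; monoidal
    _ = (psi2 ψV ψW ▷ A) ≫ (α_ A (V ⊗ W) A).hom ≫ (A ◁ psi2 ψV ψW) ≫
          (α_ A A (V ⊗ W)).inv ≫ (μ ▷ (V ⊗ W)) := by
        rw [whisker_exchange, psi2]; monoidal

lemma compat_psiVW (hV : Compat μ ψV) (hW : Compat μ ψW)
    (hΔ : psiVW ψV ψW Δ = psiVW ψV ψW Δ ≫ (A ◁ Δ)) :
    Compat μ (psiVW ψV ψW Δ) := by
  calc (psiVW ψV ψW Δ ▷ A) ≫ (α_ A (V ⊗ W) A).hom ≫ (A ◁ psiVW ψV ψW Δ) ≫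
        (α_ A A (V ⊗ W)).inv ≫ (μ ▷ (V ⊗ W))
      = ((psiVW ψV ψW Δ ≫ (A ◁ Δ)) ▷ A) ≫ (α_ A (V ⊗ W) A).hom ≫
          (A ◁ psi2 ψV ψW) ≫ (α_ A A (V ⊗ W)).inv ≫ (μ ▷ (V ⊗ W)) := by
        rw [psiVW]; monoidal
    _ = ((Δ ▷ A) ▷ A) ≫ (α_ (V ⊗ W) A A).hom ≫ ((V ⊗ W) ◁ μ) ≫ psi2 ψV ψW := by
        rw [← hΔ, psiVW, comp_whiskerRight, Category.assoc, compat_psi2_s11 μ ψV ψW hV hW]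
    _ = (α_ (V ⊗ W) A A).hom ≫ ((V ⊗ W) ◁ μ) ≫ psiVW ψV ψW Δ := by
        rw [psiVW, whisker_exchange_assoc]; monoidal

lemma comp_psiUnit_psi2 : Δ ≫ psiUnit η (psi2 ψV ψW) = psiUnit η (psiVW ψV ψW Δ) := by
  rw [psiUnit, rightUnitor_inv_naturality_assoc, ← whisker_exchange_assoc, psiUnit, psiVW]

lemma psiVW_comp_nabla_whiskerRight (hA : IsMonoid η μ) (hV : Compat μ ψV) :
    psiVW ψV ψW Δ ≫ (α_ A V W).inv ≫ (nabla η μ ψV ▷ W) ≫ (α_ A V W).hom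
      = psiVW ψV ψW Δ := by
  calc psiVW ψV ψW Δ ≫ (α_ A V W).inv ≫ (nabla η μ ψV ▷ W) ≫ (α_ A V W).hom
      = 𝟙 _ ⊗≫ (Δ ▷ A) ⊗≫ (V ◁ ψW) ⊗≫ ((ψV ≫ nabla η μ ψV) ▷ W) ⊗≫ 𝟙 _ := by
        rw [psiVW, psi2]; monoidal
    _ = psiVW ψV ψW Δ := by rw [psi_comp_nabla η μ ψV hA hV, psiVW, psi2]; monoidal

lemma mu_whiskerRight_comp_nabla_whiskerRight (hA : IsMonoid η μ) :
    (μ ▷ (V ⊗ W)) ≫ (α_ A V W).inv ≫ (nabla η μ ψV ▷ W) ≫ (α_ A V W).hom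
      = (α_ A A (V ⊗ W)).hom ≫
          (A ◁ ((α_ A V W).inv ≫ (nabla η μ ψV ▷ W) ≫ (α_ A V W).hom)) ≫
          (α_ A A (V ⊗ W)).inv ≫ (μ ▷ (V ⊗ W)) := by
  calc (μ ▷ (V ⊗ W)) ≫ (α_ A V W).inv ≫ (nabla η μ ψV ▷ W) ≫ (α_ A V W).hom
      = (α_ (A ⊗ A) V W).inv ≫ (((μ ▷ V) ≫ nabla η μ ψV) ▷ W) ≫ (α_ A V W).hom := by
        monoidal
    _ = _ := by rw [mu_whiskerRight_comp_nabla η μ ψV hA]; monoidal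

/-- `∇_{A⊗V⊗W}`, read on `(A ⊗ V) ⊗ W`. -/
def nablaVW : (A ⊗ V) ⊗ W ⟶ (A ⊗ V) ⊗ W :=
  (α_ A V W).hom ≫ nabla η μ (psiVW ψV ψW Δ) ≫ (α_ A V W).inv

lemma nablaVW_comp_nabla_whiskerRight (hA : IsMonoid η μ) (hV : Compat μ ψV) :
    nablaVW η μ ψV ψW Δ ≫ (nabla η μ ψV ▷ W) = nablaVW η μ ψV ψW Δ := by
  have h := nabla_comp_eq_self η μ (psiVW ψV ψW Δ)
    (mu_whiskerRight_comp_nabla_whiskerRight η μ ψV hA)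
    (psiVW_comp_nabla_whiskerRight η μ ψV ψW Δ hA hV)
  conv_rhs => rw [nablaVW, ← h]
  simp [nablaVW]

lemma nablaVW_comp_nablaVW (hA : IsMonoid η μ) (hV : Compat μ ψV) (hW : Compat μ ψW)
    (hΔ : psiVW ψV ψW Δ = psiVW ψV ψW Δ ≫ (A ◁ Δ)) :
    nablaVW η μ ψV ψW Δ ≫ nablaVW η μ ψV ψW Δ = nablaVW η μ ψV ψW Δ := by
  simp only [nablaVW, Category.assoc, Iso.inv_hom_id_assoc,
    reassoc_of% nabla_comp_nabla η μ _ hA (compat_psiVW μ ψV ψW Δ hV hW hΔ)]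

lemma sigma_whiskerRight_comp_nabla_psiVW (htwV : Twisted μ ψV σV)
    (hni : NewIt2 η μ ψV σV ψW Δ) :
    (σV ▷ W) ≫ (α_ A V W).hom ≫ nabla η μ (psiVW ψV ψW Δ)
      = 𝟙 _ ⊗≫ (V ◁ psiUnit η (psiVW ψV ψW Δ)) ⊗≫ (ψV ▷ (V ⊗ W)) ⊗≫
          (A ◁ ((α_ V V W).inv ≫ (σV ▷ W) ≫ (α_ A V W).hom)) ⊗≫ (μ ▷ (V ⊗ W)) := by
  calc (σV ▷ W) ≫ (α_ A V W).hom ≫ nabla η μ (psiVW ψV ψW Δ)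
      = 𝟙 _ ⊗≫ (V ◁ Δ) ⊗≫ ((V ⊗ (V ⊗ W)) ◁ η) ⊗≫ ((V ⊗ V) ◁ ψW) ⊗≫
          (((σV ▷ A) ≫ (α_ A V A).hom ≫ (A ◁ ψV) ≫ (α_ A A V).inv ≫ (μ ▷ V)) ▷ W) ⊗≫
          𝟙 _ := by
        rw [hni, muPart, tensorHom_def']; monoidal
    _ = 𝟙 _ ⊗≫ (V ◁ (Δ ≫ psiUnit η (psi2 ψV ψW))) ⊗≫ (ψV ▷ (V ⊗ W)) ⊗≫
          (A ◁ ((α_ V V W).inv ≫ (σV ▷ W) ≫ (α_ A V W).hom)) ⊗≫ (μ ▷ (V ⊗ W)) := by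
        rw [htwV, psiUnit, psi2]; monoidal
    _ = _ := by rw [comp_psiUnit_psi2]

lemma wmul_whiskerRight_comp_nablaVW_eq (hA : IsMonoid η μ) (htwV : Twisted μ ψV σV)
    (hni : NewIt2 η μ ψV σV ψW Δ) :
    (wmul μ ψV σV ▷ W) ≫ nablaVW η μ ψV ψW Δ
      = 𝟙 _ ⊗≫ (((A ⊗ V) ⊗ A) ◁ psiUnit η (psiVW ψV ψW Δ)) ⊗≫
          (A ◁ (ψV ▷ (A ⊗ (V ⊗ W)))) ⊗≫ (A ◁ A ◁ (ψV ▷ (V ⊗ W))) ⊗≫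
          (A ◁ A ◁ A ◁ ((α_ V V W).inv ≫ (σV ▷ W) ≫ (α_ A V W).hom)) ⊗≫
          (A ◁ A ◁ (μ ▷ (V ⊗ W))) ⊗≫ (A ◁ (μ ▷ (V ⊗ W))) ⊗≫ (μ ▷ (V ⊗ W)) ⊗≫
          (α_ A V W).inv := by
  calc (wmul μ ψV σV ▷ W) ≫ nablaVW η μ ψV ψW Δ
      = 𝟙 _ ⊗≫ ((A ◁ (ψV ▷ V)) ▷ W) ⊗≫ ((μ ⊗ₘ σV) ▷ W) ⊗≫
          ((μ ▷ (V ⊗ W)) ≫ nabla η μ (psiVW ψV ψW Δ)) ⊗≫ (α_ A V W).inv := by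
        rw [wmul, nablaVW]; monoidal
    _ = 𝟙 _ ⊗≫ ((A ◁ (ψV ▷ V)) ▷ W) ⊗≫
          ((μ ▷ ((V ⊗ V) ⊗ W)) ≫
            (A ◁ ((σV ▷ W) ≫ (α_ A V W).hom ≫ nabla η μ (psiVW ψV ψW Δ)))) ⊗≫
          (μ ▷ (V ⊗ W)) ⊗≫ (α_ A V W).inv := by
        rw [mu_whiskerRight_comp_nabla η μ _ hA, MonoidalCategory.tensorHom_def]; monoidal
    _ = 𝟙 _ ⊗≫ (A ◁ ((ψV ▷ (V ⊗ W)) ≫ ((A ⊗ V) ◁ psiUnit η (psiVW ψV ψW Δ)))) ⊗≫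
          (A ◁ A ◁ (ψV ▷ (V ⊗ W))) ⊗≫
          (A ◁ A ◁ A ◁ ((α_ V V W).inv ≫ (σV ▷ W) ≫ (α_ A V W).hom)) ⊗≫
          (A ◁ A ◁ (μ ▷ (V ⊗ W))) ⊗≫ (((μ ▷ A) ≫ μ) ▷ (V ⊗ W)) ⊗≫
          (α_ A V W).inv := by
        rw [← whisker_exchange, sigma_whiskerRight_comp_nabla_psiVW η μ ψV σV ψW Δ htwV hni]
        monoidal
    _ = _ := by rw [hA.2.2, ← whisker_exchange]; monoidal

lemma whiskerLeft_nablaVW_comp_wmul_eq (hA : IsMonoid η μ) (hψV : Compat μ ψV) :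
    (α_ (A ⊗ V) (A ⊗ V) W).hom ≫ ((A ⊗ V) ◁ nablaVW η μ ψV ψW Δ) ≫
        (α_ (A ⊗ V) (A ⊗ V) W).inv ≫ (wmul μ ψV σV ▷ W)
      = 𝟙 _ ⊗≫ (((A ⊗ V) ⊗ A) ◁ psiUnit η (psiVW ψV ψW Δ)) ⊗≫
          (A ◁ (ψV ▷ (A ⊗ (V ⊗ W)))) ⊗≫ (A ◁ A ◁ (ψV ▷ (V ⊗ W))) ⊗≫
          (A ◁ A ◁ A ◁ ((α_ V V W).inv ≫ (σV ▷ W) ≫ (α_ A V W).hom)) ⊗≫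
          (A ◁ A ◁ (μ ▷ (V ⊗ W))) ⊗≫ (A ◁ (μ ▷ (V ⊗ W))) ⊗≫ (μ ▷ (V ⊗ W)) ⊗≫
          (α_ A V W).inv := by
  calc (α_ (A ⊗ V) (A ⊗ V) W).hom ≫ ((A ⊗ V) ◁ nablaVW η μ ψV ψW Δ) ≫
        (α_ (A ⊗ V) (A ⊗ V) W).inv ≫ (wmul μ ψV σV ▷ W)
      = 𝟙 _ ⊗≫ (((A ⊗ V) ⊗ A) ◁ psiUnit η (psiVW ψV ψW Δ)) ⊗≫
          (A ◁ (((α_ V A A).hom ≫ (V ◁ μ) ≫ ψV) ▷ (V ⊗ W))) ⊗≫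
          (A ◁ A ◁ ((α_ V V W).inv ≫ (σV ▷ W) ≫ (α_ A V W).hom)) ⊗≫
          (μ ▷ (A ⊗ (V ⊗ W))) ⊗≫ (μ ▷ (V ⊗ W)) ⊗≫ (α_ A V W).inv := by
        rw [nablaVW, nabla_eq_psiUnit, wmul, tensorHom_def']; monoidal
    _ = 𝟙 _ ⊗≫ (((A ⊗ V) ⊗ A) ◁ psiUnit η (psiVW ψV ψW Δ)) ⊗≫
          (A ◁ (ψV ▷ (A ⊗ (V ⊗ W)))) ⊗≫ (A ◁ A ◁ (ψV ▷ (V ⊗ W))) ⊗≫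
          (A ◁ ((μ ▷ (V ⊗ (V ⊗ W))) ≫
            (A ◁ ((α_ V V W).inv ≫ (σV ▷ W) ≫ (α_ A V W).hom)))) ⊗≫
          (((μ ▷ A) ≫ μ) ▷ (V ⊗ W)) ⊗≫ (α_ A V W).inv := by
        rw [← hψV]; monoidal
    _ = 𝟙 _ ⊗≫ (((A ⊗ V) ⊗ A) ◁ psiUnit η (psiVW ψV ψW Δ)) ⊗≫
          (A ◁ (ψV ▷ (A ⊗ (V ⊗ W)))) ⊗≫ (A ◁ A ◁ (ψV ▷ (V ⊗ W))) ⊗≫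
          (A ◁ A ◁ A ◁ ((α_ V V W).inv ≫ (σV ▷ W) ≫ (α_ A V W).hom)) ⊗≫
          (A ◁ (((μ ▷ A) ≫ μ) ▷ (V ⊗ W))) ⊗≫ (μ ▷ (V ⊗ W)) ⊗≫
          (α_ A V W).inv := by
        conv_lhs => rw [← whisker_exchange, hA.2.2]
        monoidal
    _ = _ := by rw [hA.2.2]; monoidal

lemma wmul_whiskerRight_comp_nablaVW (hA : IsMonoid η μ) (hψV : Compat μ ψV)
    (htwV : Twisted μ ψV σV) (hni : NewIt2 η μ ψV σV ψW Δ) :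
    (wmul μ ψV σV ▷ W) ≫ nablaVW η μ ψV ψW Δ
      = (α_ (A ⊗ V) (A ⊗ V) W).hom ≫ ((A ⊗ V) ◁ nablaVW η μ ψV ψW Δ) ≫
          (α_ (A ⊗ V) (A ⊗ V) W).inv ≫ (wmul μ ψV σV ▷ W) :=
  (wmul_whiskerRight_comp_nablaVW_eq η μ ψV σV ψW Δ hA htwV hni).trans
    (whiskerLeft_nablaVW_comp_wmul_eq η μ ψV σV ψW Δ hA hψV).symm

end Iterated

theorem statement11_general {A V W : C} (η : 𝟙_ C ⟶ A) (μ : A ⊗ A ⟶ A)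
    (ψV : V ⊗ A ⟶ A ⊗ V) (σV : V ⊗ V ⟶ A ⊗ V)
    (ψW : W ⊗ A ⟶ A ⊗ W)
    (Δ : V ⊗ W ⟶ V ⊗ W)
    (hA : IsMonoid η μ) (hψV : Compat μ ψV) (hψW : Compat μ ψW)
    (htwV : Twisted μ ψV σV)
    (hnV : Normalized η μ ψV σV)
    (hΔ : IsLink η μ ψV ψW Δ)
    {X : C} (iX : X ⟶ A ⊗ V) (pX : A ⊗ V ⟶ X)
    (hX1 : pX ≫ iX = nabla η μ ψV) :
    nabPrime η μ ψV ψW Δ iX pX ≫ nabPrime η μ ψV ψW Δ iX pX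
        = nabPrime η μ ψV ψW Δ iX pX ∧
      (NewIt2 η μ ψV σV ψW Δ →
        (((iX ⊗ₘ iX) ≫ wmul μ ψV σV ≫ pX) ▷ W) ≫ nabPrime η μ ψV ψW Δ iX pX
          = (α_ X X W).hom ≫ (X ◁ nabPrime η μ ψV ψW Δ iX pX) ≫
              (α_ X X W).inv ≫ (((iX ⊗ₘ iX) ≫ wmul μ ψV σV ≫ pX) ▷ W)) := by
  have hnabPrime : nabPrime η μ ψV ψW Δ iX pX
      = (iX ▷ W) ≫ nablaVW η μ ψV ψW Δ ≫ (pX ▷ W) := by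
    simp [nabPrime, nablaVW]
  have hE : nablaVW η μ ψV ψW Δ ≫ ((pX ≫ iX) ▷ W) = nablaVW η μ ψV ψW Δ := by
    rw [hX1, nablaVW_comp_nabla_whiskerRight η μ ψV ψW Δ hA hψV]
  have hm : wmul μ ψV σV ≫ pX ≫ iX = wmul μ ψV σV := by
    rw [hX1, wmul_comp_nabla η μ ψV σV hA hnV]
  rw [hnabPrime]
  exact ⟨retract_conj_idem W iX pX _ hE (nablaVW_comp_nablaVW η μ ψV ψW Δ hA hψV hψW hΔ.1),
    fun hni => retract_conj_whiskerRight_mul W iX pX _ _ hE hm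
      (wmul_whiskerRight_comp_nablaVW η μ ψV σV ψW Δ hA hψV htwV hni)⟩

theorem statement11 {A V W : C} (η : 𝟙_ C ⟶ A) (μ : A ⊗ A ⟶ A)
    (ψV : V ⊗ A ⟶ A ⊗ V) (σV : V ⊗ V ⟶ A ⊗ V)
    (ψW : W ⊗ A ⟶ A ⊗ W) (σW : W ⊗ W ⟶ A ⊗ W)
    (Δ : V ⊗ W ⟶ V ⊗ W) (τ : W ⊗ V ⟶ V ⊗ W)
    (hA : IsMonoid η μ) (hψV : Compat μ ψV) (hψW : Compat μ ψW)
    (htwV : Twisted μ ψV σV) (htwW : Twisted μ ψW σW)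
    (hcoV : Cocycle μ ψV σV) (hcoW : Cocycle μ ψW σW)
    (hnV : Normalized η μ ψV σV) (hnW : Normalized η μ ψW σW)
    (hΔ : IsLink η μ ψV ψW Δ)
    (hτ1 : TwistI ψV ψW τ) (hτ2 : TwistII μ ψV σV ψW σW τ)
    (hσ : SigmaCompat Δ (sigmaVW μ ψV σV σW τ))
    (νV : 𝟙_ C ⟶ A ⊗ V) (νW : 𝟙_ C ⟶ A ⊗ W)
    (hp1V : PreEq1 η μ ψV σV νV) (hp2V : PreEq2 η μ ψV σV νV)
    (hp3V : PreEq3 μ ψV νV)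
    (hp1W : PreEq1 η μ ψW σW νW) (hp2W : PreEq2 η μ ψW σW νW)
    (hp3W : PreEq3 μ ψW νW)
    (huV : IsPreunit (wmul μ ψV σV) νV) (huW : IsPreunit (wmul μ ψW σW) νW)
    (hip1 : IterPre1 η μ ψV σV ψW τ Δ νV)
    (hip2 : IterPre2 η μ ψV ψW σW τ Δ νW)
    {X : C} (iX : X ⟶ A ⊗ V) (pX : A ⊗ V ⟶ X)
    (hX1 : pX ≫ iX = nabla η μ ψV) (hX2 : iX ≫ pX = 𝟙 X) :
    nabPrime η μ ψV ψW Δ iX pX ≫ nabPrime η μ ψV ψW Δ iX pX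
        = nabPrime η μ ψV ψW Δ iX pX ∧
      (NewIt2 η μ ψV σV ψW Δ →
        (((iX ⊗ₘ iX) ≫ wmul μ ψV σV ≫ pX) ▷ W) ≫ nabPrime η μ ψV ψW Δ iX pX
          = (α_ X X W).hom ≫ (X ◁ nabPrime η μ ψV ψW Δ iX pX) ≫
              (α_ X X W).inv ≫ (((iX ⊗ₘ iX) ≫ wmul μ ψV σV ≫ pX) ▷ W)) :=
  statement11_general η μ ψV σV ψW Δ hA hψV hψW htwV hnV hΔ iX pX hX1

end IteratedWCP
end
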